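/- Let X_1, X_2, … and Y_1, Y_2, … be independent random points, each uniformly distributed on a closed disk of radius R > 0 in the Euclidean plane ℝ². Then for any fixed r_0 > 0 and any exponent 0 < β < 1/2, almost surely, for all sufficiently large n, every index j ∈ {1,…,n} satisfies min_{1 ≤ i ≤ n} ‖Y_j − X_i‖ ≤ r_0 n^{-β}. -/

import Mathlib

open Real MeasureTheory Filter Metric
open scoped ENNReal

section Stmt14Aux

local notation "E" => EuclideanSpace ℝ (Fin 2)

lemma volE (x : E) {r : ℝ} (hr : 0 ≤ r) :
    volume (Metric.closedBall x r) = ENNReal.ofReal (π * r ^ 2) := by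
  rw [EuclideanSpace.volume_closedBall]
  simp only [Fintype.card_fin]
  rw [Nat.cast_ofNat, div_self (two_ne_zero), one_add_one_eq_two, Real.Gamma_two, div_one,
    Real.sq_sqrt pi_nonneg, ← ENNReal.ofReal_pow hr, ← ENNReal.ofReal_mul (by positivity)]
  ring_nf

lemma ball_subset_inter {R ρ : ℝ} (hρ : 0 ≤ ρ) (hρR : ρ ≤ R) {c : E} (hc : ‖c‖ ≤ R) :
    ∃ c' : E, Metric.closedBall c' (ρ/2) ⊆ Metric.closedBall c ρ ∩ Metric.closedBall 0 R := by
  set t : ℝ := min (ρ/2) ‖c‖ with ht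
  have ht0 : 0 ≤ t := le_min (by linarith) (norm_nonneg c)
  have htc : t ≤ ‖c‖ := min_le_right _ _
  have htρ : t ≤ ρ/2 := min_le_left _ _
  refine ⟨(1 - t / ‖c‖) • c, ?_⟩
  have hd : dist ((1 - t / ‖c‖) • c) c = t := by
    rcases eq_or_ne c 0 with h0 | h0
    · have : t = 0 := le_antisymm (by simpa [h0] using htc) ht0
      simp [h0, this]
    · have hcn : ‖c‖ ≠ 0 := norm_ne_zero_iff.mpr h0
      rw [dist_eq_norm, show ((1 : ℝ) - t / ‖c‖) • c - c = (-(t / ‖c‖)) • c by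
        rw [sub_smul, one_smul, neg_smul]; abel, norm_smul]
      rw [norm_neg, Real.norm_of_nonneg (by positivity)]
      field_simp
  have hn : ‖(1 - t / ‖c‖) • c‖ = ‖c‖ - t := by
    rcases eq_or_ne c 0 with h0 | h0
    · have : t = 0 := le_antisymm (by simpa [h0] using htc) ht0
      simp [h0, this]
    · have hcn : (0:ℝ) < ‖c‖ := norm_pos_iff.mpr h0
      rw [norm_smul, Real.norm_of_nonneg]
      · field_simp
      · rw [sub_nonneg, div_le_one hcn]; exact htc
  intro x hx
  simp only [Metric.mem_closedBall] at hx
  constructor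
  · simp only [Metric.mem_closedBall]
    calc dist x c ≤ dist x ((1 - t / ‖c‖) • c) + dist ((1 - t / ‖c‖) • c) c := dist_triangle _ _ _
    _ ≤ ρ/2 + t := add_le_add hx (le_of_eq hd)
    _ ≤ ρ := by linarith
  · simp only [Set.mem_setOf_eq, Metric.mem_closedBall, dist_zero_right]
    have h1 : ‖x‖ ≤ dist x ((1 - t / ‖c‖) • c) + ‖(1 - t / ‖c‖) • c‖ := by
      rw [dist_eq_norm]
      calc ‖x‖ = ‖x - (1 - t / ‖c‖) • c + (1 - t / ‖c‖) • c‖ := by rw [sub_add_cancel]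
      _ ≤ _ := norm_add_le _ _
    have h2 : ρ/2 + (‖c‖ - t) ≤ R := by
      rcases min_cases (ρ/2) ‖c‖ with ⟨he, _⟩ | ⟨he, hle⟩
      · rw [ht, he] at *; linarith
      · rw [ht, he] at *; linarith
    rw [hn] at h1
    linarith

-- probability lower bound
lemma prob_ball_ge {R ρ : ℝ} (hR : 0 < R) (hρ : 0 ≤ ρ) (hρR : ρ ≤ R)
    {Ω : Type*} [MeasurableSpace Ω] (μ : Measure Ω) [IsProbabilityMeasure μ]
    {Z : Ω → E} (hmeas : Measurable Z)
    (hunif : Measure.map Z μ =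
      (volume (Metric.closedBall (0 : E) R))⁻¹ •
        volume.restrict (Metric.closedBall (0 : E) R))
    {c : E} (hc : ‖c‖ ≤ R) :
    ENNReal.ofReal (ρ^2 / (4 * R^2)) ≤ μ (Z ⁻¹' Metric.closedBall c ρ) := by
  have hB : MeasurableSet (Metric.closedBall c ρ) := measurableSet_closedBall
  have hmap : μ (Z ⁻¹' Metric.closedBall c ρ)
      = (volume (Metric.closedBall (0 : E) R))⁻¹ *
        volume (Metric.closedBall c ρ ∩ Metric.closedBall 0 R) := by
    rw [← Measure.map_apply hmeas hB, hunif, Measure.smul_apply, smul_eq_mul,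
      Measure.restrict_apply hB]
  obtain ⟨c', hc'⟩ := ball_subset_inter hρ hρR hc
  have hle : volume (Metric.closedBall c' (ρ/2)) ≤
      volume (Metric.closedBall c ρ ∩ Metric.closedBall 0 R) := measure_mono hc'
  rw [hmap]
  rw [volE (0:E) hR.le, volE c' (by linarith : (0:ℝ) ≤ ρ/2)] at *
  calc ENNReal.ofReal (ρ^2 / (4 * R^2))
      = (ENNReal.ofReal (π * R^2))⁻¹ * ENNReal.ofReal (π * (ρ/2)^2) := by
        rw [← ENNReal.ofReal_inv_of_pos (by positivity), ← ENNReal.ofReal_mul (by positivity)]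
        congr 1
        field_simp
        ring
    _ ≤ _ := mul_le_mul_right hle _

-- independence product
lemma indep_prod {Ω : Type*} [MeasurableSpace Ω] (μ : Measure Ω)
    (X Y : ℕ → Ω → E)
    (hindep : ProbabilityTheory.iIndepFun (Sum.elim X Y) μ)
    (n : ℕ) {B : Set E} (hB : MeasurableSet B) :
    μ (⋂ i ∈ Finset.Icc 1 n, X i ⁻¹' B) = ∏ i ∈ Finset.Icc 1 n, μ (X i ⁻¹' B) := by
  classical
  have h := hindep.meas_biInter (S := (Finset.Icc 1 n).map ⟨Sum.inl, Sum.inl_injective⟩)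
    (s := fun k => Sum.elim (fun i => X i ⁻¹' B) (fun j => Y j ⁻¹' B) k) ?_
  · rw [Finset.prod_map] at h
    simp only [Function.Embedding.coeFn_mk, Sum.elim_inl] at h
    rw [← h]
    congr 1
    ext ω
    simp [Set.mem_iInter]
  · rintro (i | j) hk
    · exact ⟨B, hB, rfl⟩
    · simp at hk

noncomputable def gridPt (s : ℝ) (z : ℤ × ℤ) : E := !₂[s * z.1, s * z.2]

lemma gridPt_apply0 (s : ℝ) (z : ℤ × ℤ) : (gridPt s z) 0 = s * z.1 := rfl
lemma gridPt_apply1 (s : ℝ) (z : ℤ × ℤ) : (gridPt s z) 1 = s * z.2 := rfl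

noncomputable def net (R s : ℝ) : Finset E := by
  classical
  exact (((Finset.Icc (-(⌈R/s⌉₊:ℤ)) ⌈R/s⌉₊) ×ˢ (Finset.Icc (-(⌈R/s⌉₊:ℤ)) ⌈R/s⌉₊)).image
    (gridPt s)).filter (fun c => ‖c‖ ≤ R)

lemma net_norm_le {R s : ℝ} {c : E} (hc : c ∈ net R s) : ‖c‖ ≤ R := by
  classical
  rw [net, Finset.mem_filter] at hc
  exact hc.2

lemma net_card (R s : ℝ) : (net R s).card ≤ (2 * ⌈R/s⌉₊ + 1)^2 := by
  classical
  calc (net R s).card ≤ (((Finset.Icc (-(⌈R/s⌉₊:ℤ)) ⌈R/s⌉₊) ×ˢ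
        (Finset.Icc (-(⌈R/s⌉₊:ℤ)) ⌈R/s⌉₊)).image (gridPt s)).card := Finset.card_filter_le _ _
    _ ≤ ((Finset.Icc (-(⌈R/s⌉₊:ℤ)) ⌈R/s⌉₊) ×ˢ (Finset.Icc (-(⌈R/s⌉₊:ℤ)) ⌈R/s⌉₊)).card :=
        Finset.card_image_le
    _ = (Finset.Icc (-(⌈R/s⌉₊:ℤ)) ⌈R/s⌉₊).card ^ 2 := by rw [Finset.card_product, sq]
    _ ≤ (2 * ⌈R/s⌉₊ + 1)^2 := by
        apply Nat.pow_le_pow_left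
        rw [Int.card_Icc]
        omega

-- rounding toward zero
noncomputable def rnd (s t : ℝ) : ℤ := if 0 ≤ t then ⌊t/s⌋ else -⌊-t/s⌋

lemma rnd_props {s : ℝ} (hs : 0 < s) (t : ℝ) :
    |t - s * rnd s t| ≤ s ∧ |s * (rnd s t : ℝ)| ≤ |t| := by
  rcases le_or_gt 0 t with h | h
  · rw [rnd, if_pos h]
    have h1 : s * ⌊t/s⌋ ≤ t := by
      rw [mul_comm]
      calc (⌊t/s⌋ : ℝ) * s ≤ (t/s) * s := by
            apply mul_le_mul_of_nonneg_right (Int.floor_le _) hs.le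
        _ = t := by field_simp
    have h2 : t < s * ⌊t/s⌋ + s := by
      have := Int.lt_floor_add_one (t/s)
      have := mul_lt_mul_of_pos_right this hs
      rw [add_mul, one_mul, div_mul_cancel₀ _ hs.ne'] at this
      linarith [this]
    have h3 : 0 ≤ (⌊t/s⌋:ℝ) := by
      have : (0:ℤ) ≤ ⌊t/s⌋ := Int.floor_nonneg.mpr (by positivity)
      exact_mod_cast this
    constructor
    · rw [abs_le]; constructor <;> nlinarith
    · rw [abs_of_nonneg (by positivity), abs_of_nonneg h]; linarith
  · rw [rnd, if_neg (not_le.mpr h)]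
    have h1 : s * ⌊-t/s⌋ ≤ -t := by
      rw [mul_comm]
      calc (⌊-t/s⌋ : ℝ) * s ≤ (-t/s) * s := by
            apply mul_le_mul_of_nonneg_right (Int.floor_le _) hs.le
        _ = -t := by field_simp
    have h2 : -t < s * ⌊-t/s⌋ + s := by
      have := Int.lt_floor_add_one (-t/s)
      have := mul_lt_mul_of_pos_right this hs
      rw [add_mul, one_mul, div_mul_cancel₀ _ hs.ne'] at this
      linarith [this]
    have h3 : 0 ≤ (⌊-t/s⌋:ℝ) := by
      have : (0:ℤ) ≤ ⌊-t/s⌋ := Int.floor_nonneg.mpr (div_nonneg (by linarith) hs.le)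
      exact_mod_cast this
    push_cast
    constructor
    · rw [abs_le]; constructor <;> nlinarith
    · rw [abs_of_nonpos (by nlinarith), abs_of_nonpos h.le]; nlinarith

lemma coord_le_norm (y : E) (i : Fin 2) : |y i| ≤ ‖y‖ := by
  rw [EuclideanSpace.norm_eq, ← Real.sqrt_sq_eq_abs]
  apply Real.sqrt_le_sqrt
  rw [Fin.sum_univ_two]
  fin_cases i <;> simp <;> positivity

lemma rnd_mem {R s t : ℝ} (hs : 0 < s) (ht : |s * ((rnd s t : ℤ) : ℝ)| ≤ |t|) (htR : |t| ≤ R) :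
    -(⌈R/s⌉₊:ℤ) ≤ rnd s t ∧ rnd s t ≤ ⌈R/s⌉₊ := by
  have h1 : |((rnd s t : ℤ) : ℝ)| ≤ R / s := by
    rw [le_div_iff₀ hs]
    calc |((rnd s t : ℤ) : ℝ)| * s = |s * ((rnd s t : ℤ) : ℝ)| := by
          rw [abs_mul, abs_of_pos hs]; ring
      _ ≤ R := ht.trans htR
  have h2 : |((rnd s t : ℤ) : ℝ)| ≤ ((⌈R/s⌉₊ : ℤ) : ℝ) := by
    refine h1.trans ?_
    push_cast
    exact Nat.le_ceil _
  have h3 : |rnd s t| ≤ (⌈R/s⌉₊ : ℤ) := by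
    exact_mod_cast (by exact_mod_cast h2 : ((|rnd s t| : ℤ) : ℝ) ≤ ((⌈R/s⌉₊ : ℤ) : ℝ))
  exact abs_le.mp h3

lemma net_covers {R s : ℝ} (hs : 0 < s) {y : E} (hy : ‖y‖ ≤ R) :
    ∃ c ∈ net R s, dist y c ≤ 2 * s := by
  classical
  set z : ℤ × ℤ := (rnd s (y 0), rnd s (y 1)) with hz
  have p0 := rnd_props hs (y 0)
  have p1 := rnd_props hs (y 1)
  have hyR : ∀ i : Fin 2, |y i| ≤ R := fun i => (coord_le_norm y i).trans hy
  have hnorm : ‖gridPt s z‖ ≤ ‖y‖ := by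
    rw [EuclideanSpace.norm_eq, EuclideanSpace.norm_eq]
    apply Real.sqrt_le_sqrt
    rw [Fin.sum_univ_two, Fin.sum_univ_two, gridPt_apply0, gridPt_apply1]
    simp only [Real.norm_eq_abs, sq_abs]
    have a0 : (s * (z.1:ℝ))^2 ≤ (y 0)^2 := by
      rw [← sq_abs (s * _), ← sq_abs (y 0)]
      exact pow_le_pow_left₀ (abs_nonneg _) p0.2 2
    have a1 : (s * (z.2:ℝ))^2 ≤ (y 1)^2 := by
      rw [← sq_abs (s * _), ← sq_abs (y 1)]
      exact pow_le_pow_left₀ (abs_nonneg _) p1.2 2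
    linarith
  have hmem : gridPt s z ∈ net R s := by
    rw [net, Finset.mem_filter]
    refine ⟨Finset.mem_image.mpr ⟨z, ?_, rfl⟩, hnorm.trans hy⟩
    rw [Finset.mem_product, Finset.mem_Icc, Finset.mem_Icc]
    obtain ⟨b0l, b0r⟩ := rnd_mem hs p0.2 (hyR 0)
    obtain ⟨b1l, b1r⟩ := rnd_mem hs p1.2 (hyR 1)
    exact ⟨⟨b0l, b0r⟩, ⟨b1l, b1r⟩⟩
  refine ⟨gridPt s z, hmem, ?_⟩
  rw [EuclideanSpace.dist_eq, Fin.sum_univ_two, gridPt_apply0, gridPt_apply1]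
  simp only [Real.dist_eq]
  have d0 : |y 0 - s * (z.1:ℝ)|^2 ≤ s^2 := by
    rw [← sq_abs s]
    exact pow_le_pow_left₀ (abs_nonneg _) (p0.1.trans (le_abs_self s)) 2
  have d1 : |y 1 - s * (z.2:ℝ)|^2 ≤ s^2 := by
    rw [← sq_abs s]
    exact pow_le_pow_left₀ (abs_nonneg _) (p1.1.trans (le_abs_self s)) 2
  calc Real.sqrt (|y 0 - s * (z.1:ℝ)|^2 + |y 1 - s * (z.2:ℝ)|^2)
      ≤ Real.sqrt ((2*s)^2) := Real.sqrt_le_sqrt (by nlinarith)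
    _ = 2 * s := Real.sqrt_sq (by positivity)

lemma exp_neg_le {c : ℝ} (hc : 0 < c) {ε : ℝ} (hε : 0 < ε) :
    ∃ K : ℝ, 0 ≤ K ∧ ∀ n : ℕ, 1 ≤ n →
      Real.exp (-(c * (n:ℝ) ^ ε)) ≤ K / (n:ℝ)^5 := by
  set k := ⌈5/ε⌉₊ with hk
  refine ⟨(k.factorial : ℝ) / c^k, by positivity, fun n hn => ?_⟩
  have hn1 : (1:ℝ) ≤ (n:ℝ) := by exact_mod_cast hn
  have hnp : (0:ℝ) < (n:ℝ) := by linarith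
  set x := c * (n:ℝ) ^ ε with hx
  have hxpos : 0 < x := by positivity
  have h1 : x ^ k / (k.factorial : ℝ) ≤ Real.exp x := by
    calc x ^ k / (k.factorial : ℝ) = ∑ i ∈ Finset.range (k+1), if i = k then x^k / k.factorial else 0 := by
          rw [Finset.sum_ite_eq' (Finset.range (k+1)) k]
          simp
      _ ≤ ∑ i ∈ Finset.range (k+1), x ^ i / (i.factorial : ℝ) := by
          apply Finset.sum_le_sum
          intro i hi
          split
          · subst i; exact le_refl _
          · positivity
      _ ≤ Real.exp x := Real.sum_le_exp_of_nonneg hxpos.le _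
  have h2 : Real.exp (-x) ≤ (k.factorial : ℝ) / x ^ k := by
    rw [Real.exp_neg, inv_eq_one_div, div_le_div_iff₀ (Real.exp_pos x) (by positivity)]
    have h1' := (div_le_iff₀ (by positivity : (0:ℝ) < (k.factorial:ℝ))).mp h1
    linarith
  refine h2.trans ?_
  have hx5 : c ^ k * (n:ℝ)^5 ≤ x ^ k := by
    rw [hx, mul_pow]
    apply mul_le_mul_of_nonneg_left _ (by positivity)
    have h5k : (5:ℝ) ≤ ε * k := by
      have : (5:ℝ)/ε ≤ (k:ℝ) := Nat.le_ceil _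
      calc (5:ℝ) = (5/ε) * ε := by field_simp
        _ ≤ (k:ℝ) * ε := mul_le_mul_of_nonneg_right this hε.le
        _ = ε * k := mul_comm _ _
    calc (n:ℝ)^5 = (n:ℝ)^((5:ℕ):ℝ) := by rw [Real.rpow_natCast]
      _ ≤ (n:ℝ)^(ε * k) := Real.rpow_le_rpow_of_exponent_le hn1 (by exact_mod_cast h5k)
      _ = ((n:ℝ)^ε)^(k:ℕ) := by rw [Real.rpow_mul hnp.le, Real.rpow_natCast]
  rw [div_le_div_iff₀ (by positivity) (by positivity)]
  calc (k.factorial:ℝ) * (n:ℝ)^5 = (k.factorial / c^k) * (c^k * (n:ℝ)^5) := by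
        field_simp
    _ ≤ (k.factorial / c^k) * x^k := by
        apply mul_le_mul_of_nonneg_left hx5 (by positivity)
    _ = (k.factorial : ℝ)/c^k * x^k := rfl

lemma b_summable {R r0 β : ℝ} (hR : 0 < R) (hr0 : 0 < r0) (hβ0 : 0 < β) (hβ1 : β < 1/2) :
    ∃ b : ℕ → ℝ, (∀ n, 0 ≤ b n) ∧ Summable b ∧ ∀ n : ℕ, 1 ≤ n →
      ((2 * ⌈R / (r0 * (n:ℝ)^(-β) / 8)⌉₊ + 1 : ℕ) : ℝ)^2 *
        (1 - (min (r0*(n:ℝ)^(-β)/2) R)^2/(4*R^2))^n ≤ b n := by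
  set c₀ : ℝ := min (r0^2/(16*R^2)) (1/4) with hc₀
  have hc₀pos : 0 < c₀ := lt_min (by positivity) (by norm_num)
  set ε : ℝ := 1 - 2*β with hε
  have hεpos : 0 < ε := by rw [hε]; linarith
  obtain ⟨K, hK0, hK⟩ := exp_neg_le hc₀pos hεpos
  set C₁ : ℝ := 16*R/r0 + 3 with hC₁
  have hC₁pos : 0 < C₁ := by positivity
  refine ⟨fun n => (C₁^2 * K) * (((n:ℝ)^2)⁻¹), fun n => by positivity, ?_, ?_⟩
  · apply Summable.mul_left
    exact Real.summable_nat_pow_inv.mpr (by norm_num)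
  intro n hn
  have hn1 : (1:ℝ) ≤ (n:ℝ) := by exact_mod_cast hn
  have hnp : (0:ℝ) < (n:ℝ) := by linarith
  set r : ℝ := r0 * (n:ℝ)^(-β) with hr
  have hrpos : 0 < r := by
    rw [hr]; positivity
  set q : ℝ := (min (r/2) R)^2/(4*R^2) with hq
  have hq0 : 0 ≤ q := by positivity
  have hq1 : q ≤ 1/4 := by
    rw [hq]
    have h1 : (min (r/2) R)^2 ≤ R^2 := by
      apply pow_le_pow_left₀ (le_min (by positivity) hR.le) (min_le_right _ _)
    rw [div_le_div_iff₀ (by positivity) (by norm_num)]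
    nlinarith
  -- lower bound on r : r ≥ r0 / n
  have hrlow : r0 * (n:ℝ)⁻¹ ≤ r := by
    rw [hr]
    apply mul_le_mul_of_nonneg_left _ hr0.le
    rw [← Real.rpow_neg_one]
    exact Real.rpow_le_rpow_of_exponent_le hn1 (by linarith)
  -- card factor bound
  have hcard : ((2 * ⌈R / (r/8)⌉₊ + 1 : ℕ) : ℝ) ≤ C₁ * n := by
    have hceil : (⌈R / (r/8)⌉₊ : ℝ) < R/(r/8) + 1 := Nat.ceil_lt_add_one (by positivity)
    have hdiv : R/(r/8) ≤ 8*R*(n:ℝ)/r0 := by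
      rw [div_div_eq_mul_div, div_le_div_iff₀ hrpos (by positivity)]
      calc R * 8 * r0 = 8 * R * (n:ℝ) * (r0 * (n:ℝ)⁻¹) := by field_simp
        _ ≤ 8 * R * (n:ℝ) * r := mul_le_mul_of_nonneg_left hrlow (by positivity)
    push_cast
    calc 2 * (⌈R / (r/8)⌉₊ : ℝ) + 1 ≤ 2 * (8*R*(n:ℝ)/r0 + 1) + 1 := by
          have := hceil.le.trans (by linarith : R/(r/8) + 1 ≤ 8*R*(n:ℝ)/r0 + 1)
          linarith
      _ = 16*R/r0 * n + 3 := by field_simp; ring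
      _ ≤ C₁ * n := by rw [hC₁]; nlinarith
  -- exponential factor bound
  have hnq : c₀ * (n:ℝ)^ε ≤ (n:ℝ) * q := by
    have hrpow2 : ((n:ℝ)^(-β))^2 = (n:ℝ)^(-(2*β)) := by
      rw [← Real.rpow_natCast ((n:ℝ)^(-β)) 2, ← Real.rpow_mul hnp.le]
      norm_num
      ring_nf
    have hmul : (n:ℝ) * (n:ℝ)^(-(2*β)) = (n:ℝ)^ε := by
      nth_rewrite 1 [← Real.rpow_one (n:ℝ)]
      rw [← Real.rpow_add hnp, hε]
      ring_nf
    rcases min_cases (r/2) R with ⟨he, hle⟩ | ⟨he, hle⟩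
    · rw [hq, he]
      have : (n:ℝ) * ((r/2)^2/(4*R^2)) = (r0^2/(16*R^2)) * ((n:ℝ) * ((n:ℝ)^(-β))^2) := by
        rw [hr]; field_simp; ring
      rw [this, hrpow2, hmul]
      apply mul_le_mul_of_nonneg_right (min_le_left _ _) (by positivity)
    · rw [hq, he]
      have h2 : (n:ℝ) * (R^2/(4*R^2)) = (1/4) * (n:ℝ) := by field_simp
      rw [h2]
      have h3 : (n:ℝ)^ε ≤ (n:ℝ) := by
        nth_rewrite 2 [← Real.rpow_one (n:ℝ)]
        exact Real.rpow_le_rpow_of_exponent_le hn1 (by rw [hε]; linarith)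
      calc c₀ * (n:ℝ)^ε ≤ (1/4) * (n:ℝ)^ε := by
            apply mul_le_mul_of_nonneg_right (min_le_right _ _) (by positivity)
        _ ≤ (1/4) * (n:ℝ) := by linarith
  have hexp : (1 - q)^n ≤ K / (n:ℝ)^5 := by
    calc (1 - q)^n ≤ (Real.exp (-q))^n := by
          apply pow_le_pow_left₀ (by linarith)
          linarith [Real.add_one_le_exp (-q)]
      _ = Real.exp ((n:ℝ) * (-q)) := by rw [← Real.exp_nat_mul]
      _ ≤ Real.exp (-(c₀ * (n:ℝ)^ε)) := by
          apply Real.exp_le_exp.mpr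
          have : (n:ℝ) * (-q) = -((n:ℝ) * q) := by ring
          rw [this]
          linarith
      _ ≤ K / (n:ℝ)^5 := hK n hn
  -- combine
  calc ((2 * ⌈R / (r/8)⌉₊ + 1 : ℕ) : ℝ)^2 * (1 - q)^n
      ≤ (C₁ * n)^2 * (K / (n:ℝ)^5) := by
        apply mul_le_mul (pow_le_pow_left₀ (by positivity) hcard 2) hexp
          (pow_nonneg (by linarith) n) (by positivity)
    _ = (C₁^2 * K) * ((n:ℝ)^2 * ((n:ℝ)^5)⁻¹) := by ring
    _ ≤ (C₁^2 * K) * (((n:ℝ)^2)⁻¹) := by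
        apply mul_le_mul_of_nonneg_left _ (by positivity)
        have h1 : (n:ℝ)^2 * ((n:ℝ)^5)⁻¹ = ((n:ℝ)^3)⁻¹ := by
          field_simp
        rw [h1, inv_le_inv₀ (by positivity) (by positivity)]
        exact pow_le_pow_right₀ hn1 (by norm_num)

end Stmt14Aux


set_option maxHeartbeats 1000000 in
/-- Let `X_1, X_2, …` (sources) and `Y_1, Y_2, …` (destinations) be
independent random points, each uniform on a closed disk of radius `R` in the plane.
Then for any `r0 > 0` and any `0 < β < 1/2`, almost surely, for all sufficiently large
`n`, every `j ∈ {1,…,n}` has some source `i ∈ {1,…,n}` with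
`dist (Y_j, X_i) ≤ r0 n⁻ᵝ` (i.e. `min_{1 ≤ i ≤ n} ‖Y_j − X_i‖ ≤ r0 n⁻ᵝ`). -/
theorem stmt14 (R r0 β : ℝ) (hR : 0 < R) (hr0 : 0 < r0) (hβ0 : 0 < β) (hβ1 : β < 1 / 2)
    {Ω : Type*} [MeasurableSpace Ω] (μ : Measure Ω) [IsProbabilityMeasure μ]
    (X Y : ℕ → Ω → EuclideanSpace ℝ (Fin 2))
    (hmeasX : ∀ i, Measurable (X i)) (hmeasY : ∀ i, Measurable (Y i))
    (hindep : ProbabilityTheory.iIndepFun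
      (Sum.elim X Y) μ)
    (hunifX : ∀ i, Measure.map (X i) μ =
      (volume (Metric.closedBall (0 : EuclideanSpace ℝ (Fin 2)) R))⁻¹ •
        volume.restrict (Metric.closedBall (0 : EuclideanSpace ℝ (Fin 2)) R))
    (hunifY : ∀ i, Measure.map (Y i) μ =
      (volume (Metric.closedBall (0 : EuclideanSpace ℝ (Fin 2)) R))⁻¹ •
        volume.restrict (Metric.closedBall (0 : EuclideanSpace ℝ (Fin 2)) R)) :
    ∀ᵐ ω ∂μ, ∀ᶠ n : ℕ in atTop, ∀ j ∈ Finset.Icc 1 n,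
      ∃ i ∈ Finset.Icc 1 n, dist (Y j ω) (X i ω) ≤ r0 * (n : ℝ) ^ (-β) := by
  classical
  set r : ℕ → ℝ := fun n => r0 * (n:ℝ)^(-β) with hrdef
  set ρ : ℕ → ℝ := fun n => min (r n / 2) R with hρdef
  set nt : ℕ → Finset (EuclideanSpace ℝ (Fin 2)) := fun n => net R (r n / 8) with hntdef
  set bad : ℕ → Set Ω := fun n =>
    ⋃ c ∈ nt n, ⋂ i ∈ Finset.Icc 1 n, X i ⁻¹' (Metric.closedBall c (ρ n))ᶜ with hbaddef
  have hrnn : ∀ n : ℕ, 0 ≤ r n := fun n => by positivity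
  have hρnn : ∀ n : ℕ, 0 ≤ ρ n := fun n => le_min (by linarith [hrnn n]) hR.le
  have hρR : ∀ n : ℕ, ρ n ≤ R := fun n => min_le_right _ _
  have hq1 : ∀ n : ℕ, (ρ n)^2/(4*R^2) ≤ 1/4 := by
    intro n
    rw [div_le_div_iff₀ (by positivity) (by norm_num)]
    nlinarith [pow_le_pow_left₀ (hρnn n) (hρR n) 2]
  -- measure bound on bad events
  have hbound : ∀ n : ℕ, 1 ≤ n → μ (bad n) ≤ ENNReal.ofReal
      (((2 * ⌈R / (r n / 8)⌉₊ + 1 : ℕ) : ℝ)^2 * (1 - (ρ n)^2/(4*R^2))^n) := by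
    intro n hn
    have hfac : ∀ c ∈ nt n, μ (⋂ i ∈ Finset.Icc 1 n, X i ⁻¹' (Metric.closedBall c (ρ n))ᶜ)
        ≤ ENNReal.ofReal ((1 - (ρ n)^2/(4*R^2))^n) := by
      intro c hc
      have hcR : ‖c‖ ≤ R := net_norm_le hc
      rw [indep_prod μ X Y hindep n measurableSet_closedBall.compl]
      have hone : ∀ i ∈ Finset.Icc 1 n, μ (X i ⁻¹' (Metric.closedBall c (ρ n))ᶜ)
          ≤ ENNReal.ofReal (1 - (ρ n)^2/(4*R^2)) := by
        intro i _
        rw [Set.preimage_compl, prob_compl_eq_one_sub ((hmeasX i) measurableSet_closedBall)]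
        have hge := prob_ball_ge hR (hρnn n) (hρR n) μ (hmeasX i) (hunifX i) hcR
        calc (1 : ℝ≥0∞) - μ (X i ⁻¹' Metric.closedBall c (ρ n))
            ≤ 1 - ENNReal.ofReal ((ρ n)^2/(4*R^2)) := tsub_le_tsub_left hge 1
          _ = ENNReal.ofReal (1 - (ρ n)^2/(4*R^2)) := by
              rw [ENNReal.ofReal_sub _ (by positivity), ENNReal.ofReal_one]
      calc ∏ i ∈ Finset.Icc 1 n, μ (X i ⁻¹' (Metric.closedBall c (ρ n))ᶜ)
          ≤ ∏ _i ∈ Finset.Icc 1 n, ENNReal.ofReal (1 - (ρ n)^2/(4*R^2)) :=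
            Finset.prod_le_prod' hone
        _ = ENNReal.ofReal (1 - (ρ n)^2/(4*R^2)) ^ n := by
            rw [Finset.prod_const, Nat.card_Icc, Nat.add_sub_cancel]
        _ = ENNReal.ofReal ((1 - (ρ n)^2/(4*R^2))^n) := by
            rw [ENNReal.ofReal_pow (by linarith [hq1 n])]
    calc μ (bad n) ≤ ∑ c ∈ nt n, μ (⋂ i ∈ Finset.Icc 1 n, X i ⁻¹' (Metric.closedBall c (ρ n))ᶜ) :=
          measure_biUnion_finset_le _ _
      _ ≤ (nt n).card • ENNReal.ofReal ((1 - (ρ n)^2/(4*R^2))^n) :=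
          Finset.sum_le_card_nsmul _ _ _ hfac
      _ = ((nt n).card : ℝ≥0∞) * ENNReal.ofReal ((1 - (ρ n)^2/(4*R^2))^n) := by
          rw [nsmul_eq_mul]
      _ ≤ (((2 * ⌈R / (r n / 8)⌉₊ + 1)^2 : ℕ) : ℝ≥0∞) *
            ENNReal.ofReal ((1 - (ρ n)^2/(4*R^2))^n) := by
          apply mul_le_mul_left
          exact_mod_cast net_card R (r n / 8)
      _ = ENNReal.ofReal (((2 * ⌈R / (r n / 8)⌉₊ + 1 : ℕ) : ℝ)^2 * (1 - (ρ n)^2/(4*R^2))^n) := by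
          rw [ENNReal.ofReal_mul (by positivity)]
          congr 1
          · rw [show (((2 * ⌈R / (r n / 8)⌉₊ + 1 : ℕ) : ℝ))^2
              = (((2 * ⌈R / (r n / 8)⌉₊ + 1)^2 : ℕ) : ℝ) by push_cast; ring]
            rw [ENNReal.ofReal_natCast]
  -- summability
  obtain ⟨b, hb0, hbsum, hble⟩ := b_summable hR hr0 hβ0 hβ1
  have htsum : (∑' n, μ (bad n)) ≠ ⊤ := by
    set b' : ℕ → ℝ := fun n => if n = 0 then 1 else b n with hb'def
    have hb'0 : ∀ n, 0 ≤ b' n := by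
      intro n
      rcases eq_or_ne n 0 with h | h <;> simp [hb'def, h, hb0 n]
    have hb'sum : Summable b' := by
      rw [← summable_nat_add_iff 1]
      have : (fun n : ℕ => b' (n + 1)) = fun n : ℕ => b (n + 1) := by
        funext n
        simp [hb'def]
      rw [this]
      exact (summable_nat_add_iff 1).mpr hbsum
    have hptwise : ∀ n : ℕ, μ (bad n) ≤ ENNReal.ofReal (b' n) := by
      intro n
      rcases Nat.eq_zero_or_pos n with h0 | h1
      · subst h0
        simp only [hb'def, if_pos rfl, ENNReal.ofReal_one]
        exact prob_le_one
      · have hne : n ≠ 0 := Nat.pos_iff_ne_zero.mp h1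
        simp only [hb'def, if_neg hne]
        exact (hbound n h1).trans (ENNReal.ofReal_le_ofReal (hble n h1))
    have hle : (∑' n, μ (bad n)) ≤ ENNReal.ofReal (∑' n, b' n) := by
      rw [ENNReal.ofReal_tsum_of_nonneg hb'0 hb'sum]
      exact ENNReal.tsum_le_tsum hptwise
    exact ne_top_of_le_ne_top ENNReal.ofReal_ne_top hle
  -- Y's are in the disk a.s.
  have hYD : ∀ j : ℕ, ∀ᵐ ω ∂μ, Y j ω ∈ Metric.closedBall (0 : EuclideanSpace ℝ (Fin 2)) R := by
    intro j
    have hD : MeasurableSet (Metric.closedBall (0 : EuclideanSpace ℝ (Fin 2)) R) :=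
      measurableSet_closedBall
    have h1 : μ (Y j ⁻¹' Metric.closedBall (0 : EuclideanSpace ℝ (Fin 2)) R) = 1 := by
      rw [← Measure.map_apply (hmeasY j) hD, hunifY j, Measure.smul_apply, smul_eq_mul,
        Measure.restrict_apply hD, Set.inter_self]
      rw [volE (0 : EuclideanSpace ℝ (Fin 2)) hR.le]
      rw [ENNReal.inv_mul_cancel (by simp [ENNReal.ofReal_pos]; positivity) ENNReal.ofReal_ne_top]
    have h2 : μ (Y j ⁻¹' Metric.closedBall (0 : EuclideanSpace ℝ (Fin 2)) R)ᶜ = 0 := by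
      rw [prob_compl_eq_one_sub ((hmeasY j) hD), h1, tsub_self]
    rw [ae_iff]
    convert h2 using 2
    ext ω; simp
  -- assemble
  filter_upwards [ae_eventually_notMem htsum, ae_all_iff.mpr hYD] with ω hbc hYmem
  filter_upwards [hbc, eventually_ge_atTop 1] with n hnb hn1
  intro j hj
  have hrpos : 0 < r n := by
    have : (0:ℝ) < (n:ℝ) := by exact_mod_cast hn1
    positivity
  have hy : ‖Y j ω‖ ≤ R := by
    have := hYmem j
    rwa [Metric.mem_closedBall, dist_zero_right] at this
  obtain ⟨c, hcnet, hcd⟩ := net_covers (by positivity : (0:ℝ) < r n / 8) hy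
  -- extract a source point near c
  have hnb' : ∀ c ∈ nt n, ∃ i ∈ Finset.Icc 1 n, X i ω ∈ Metric.closedBall c (ρ n) := by
    intro c' hc'
    by_contra hcon
    push_neg at hcon
    apply hnb
    rw [hbaddef]
    refine Set.mem_iUnion₂.mpr ⟨c', hc', Set.mem_iInter₂.mpr ?_⟩
    intro i hi
    exact hcon i hi
  obtain ⟨i, hi, hXi⟩ := hnb' c hcnet
  refine ⟨i, hi, ?_⟩
  rw [Metric.mem_closedBall] at hXi
  calc dist (Y j ω) (X i ω) ≤ dist (Y j ω) c + dist c (X i ω) := dist_triangle _ _ _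
    _ ≤ 2 * (r n / 8) + ρ n := add_le_add hcd (by rw [dist_comm]; exact hXi)
    _ ≤ 2 * (r n / 8) + r n / 2 := by linarith [min_le_left (r n / 2) R]
    _ ≤ r n := by linarith
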